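/- Soundness of bidirectional typing with respect to type assignment: if Ψ ⊢ e ⇐ A or Ψ ⊢ e ⇒ A in the declarative bidirectional system, then there exists an annotation-free term e' such that Ψ ⊢ e' : A in the type assignment system and e' =βη |e|. -/

import Mathlib

set_option autoImplicit true

namespace DK

/-- Types: 1 | α | A → B | ∀α. A  (type variables named by naturals) -/
inductive Ty : Type where
  | unit : Ty
  | var : ℕ → Ty
  | arr : Ty → Ty → Ty
  | all : ℕ → Ty → Ty

/-- Monotypes: types containing no quantifiers. -/
def Ty.mono : Ty → Prop
  | .unit => True
  | .var _ => True
  | .arr A B => A.mono ∧ B.mono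
  | .all _ _ => False

/-- Free type variables. -/
def Ty.fv : Ty → Finset ℕ
  | .unit => ∅
  | .var a => {a}
  | .arr A B => A.fv ∪ B.fv
  | .all a A => A.fv.erase a

/-- `A.subst τ a` is the substitution [τ/a]A. -/
def Ty.subst : Ty → Ty → ℕ → Ty
  | .unit, _, _ => .unit
  | .var b, τ, a => if b = a then τ else .var b
  | .arr A B, τ, a => .arr (A.subst τ a) (B.subst τ a)
  | .all b A, τ, a => .all b (if b = a then A else A.subst τ a)

/-- Declarative context entries: type variables α and term variable typings x : A. -/
inductive Decl : Type where
  | tvar : ℕ → Decl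
  | var : ℕ → Ty → Decl

/-- Declarative contexts; the most recent declaration is the head
    (so "Ψ, α" is `Decl.tvar α :: Ψ`). -/
abbrev Ctx := List Decl

/-- Well-formedness Ψ ⊢ A : every free type variable of A is declared in Ψ. -/
def WfTy (Ψ : Ctx) (A : Ty) : Prop :=
  ∀ a ∈ A.fv, Decl.tvar a ∈ Ψ

/-- Declarative subtyping Ψ ⊢ A ≤ B. -/
inductive Sub : Ctx → Ty → Ty → Prop where
  | var : Decl.tvar a ∈ Ψ → Sub Ψ (.var a) (.var a)
  | unit : Sub Ψ .unit .unit
  | arr : Sub Ψ B₁ A₁ → Sub Ψ A₂ B₂ → Sub Ψ (.arr A₁ A₂) (.arr B₁ B₂)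
  | allL : (τ : Ty) → τ.mono → WfTy Ψ τ → Sub Ψ (A.subst τ a) B → Sub Ψ (.all a A) B
  | allR : Sub (Decl.tvar b :: Ψ) A B → Sub Ψ A (.all b B)

end DK

namespace DK

/-- Terms: x | () | λx.e | e₁ e₂ | (e : A). -/
inductive Tm : Type where
  | var : ℕ → Tm
  | unit : Tm
  | lam : ℕ → Tm → Tm
  | app : Tm → Tm → Tm
  | anno : Tm → Ty → Tm

/-- Erasure |e| of all type annotations. -/
def Tm.erase : Tm → Tm
  | .var x => .var x
  | .unit => .unit
  | .lam x e => .lam x e.erase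
  | .app e₁ e₂ => .app e₁.erase e₂.erase
  | .anno e _ => e.erase

/-- A term is annotation-free if it contains no type annotations. -/
def Tm.annFree : Tm → Prop
  | .var _ => True
  | .unit => True
  | .lam _ e => e.annFree
  | .app e₁ e₂ => e₁.annFree ∧ e₂.annFree
  | .anno _ _ => False

/-- Free term variables. -/
def Tm.fv : Tm → Finset ℕ
  | .var x => {x}
  | .unit => ∅
  | .lam x e => e.fv.erase x
  | .app e₁ e₂ => e₁.fv ∪ e₂.fv
  | .anno e _ => e.fv

/-- `e'.subst e x` is the term substitution [e/x]e'. -/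
def Tm.subst : Tm → Tm → ℕ → Tm
  | .var y, v, x => if y = x then v else .var y
  | .unit, _, _ => .unit
  | .lam y e, v, x => .lam y (if y = x then e else e.subst v x)
  | .app e₁ e₂, v, x => .app (e₁.subst v x) (e₂.subst v x)
  | .anno e A, v, x => .anno (e.subst v x) A

/-- Type assignment Ψ ⊢ e : A (for annotation-free terms). -/
inductive Assign : Ctx → Tm → Ty → Prop where
  | var : Decl.var x A ∈ Ψ → Assign Ψ (.var x) A
  | unit : Assign Ψ .unit .unit
  | lam : Assign (Decl.var x A :: Ψ) e B → Assign Ψ (.lam x e) (.arr A B)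
  | app : Assign Ψ e₁ (.arr A B) → Assign Ψ e₂ A → Assign Ψ (.app e₁ e₂) B
  | allI : Assign (Decl.tvar a :: Ψ) e A → Assign Ψ e (.all a A)
  | allE : Assign Ψ e (.all a A) → (τ : Ty) → τ.mono → WfTy Ψ τ →
      Assign Ψ e (A.subst τ a)

mutual
/-- Declarative bidirectional checking Ψ ⊢ e ⇐ A. -/
inductive Chk : Ctx → Tm → Ty → Prop where
  | sub : Syn Ψ e A → Sub Ψ A B → Chk Ψ e B
  | unitI : Chk Ψ .unit .unit
  | allI : Chk (Decl.tvar a :: Ψ) e A → Chk Ψ e (.all a A)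
  | arrI : Chk (Decl.var x A :: Ψ) e B → Chk Ψ (.lam x e) (.arr A B)

/-- Declarative bidirectional synthesis Ψ ⊢ e ⇒ A. -/
inductive Syn : Ctx → Tm → Ty → Prop where
  | var : Decl.var x A ∈ Ψ → Syn Ψ (.var x) A
  | anno : WfTy Ψ A → Chk Ψ e A → Syn Ψ (.anno e A) A
  | unitI : Syn Ψ .unit .unit
  | arrI : Ty.mono σ → Ty.mono τ → WfTy Ψ (.arr σ τ) →
      Chk (Decl.var x σ :: Ψ) e τ → Syn Ψ (.lam x e) (.arr σ τ)
  | arrE : Syn Ψ e₁ A → App Ψ e₂ A C → Syn Ψ (.app e₁ e₂) C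

/-- Declarative application judgment Ψ ⊢ e • A ⇒⇒ C. -/
inductive App : Ctx → Tm → Ty → Ty → Prop where
  | allApp : (τ : Ty) → τ.mono → WfTy Ψ τ → App Ψ e (A.subst τ a) C →
      App Ψ e (.all a A) C
  | arrApp : Chk Ψ e A → App Ψ e (.arr A C) C
end

/-- βη-equivalence of terms: the least congruence containing β- and η-conversion. -/
inductive BetaEta : Tm → Tm → Prop where
  | beta : BetaEta (.app (.lam x e) e') (e.subst e' x)
  | eta : x ∉ Tm.fv e → BetaEta (.lam x (.app e (.var x))) e
  | refl : BetaEta e e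
  | symm : BetaEta e₁ e₂ → BetaEta e₂ e₁
  | trans : BetaEta e₁ e₂ → BetaEta e₂ e₃ → BetaEta e₁ e₃
  | lam : BetaEta e e' → BetaEta (.lam x e) (.lam x e')
  | app : BetaEta e₁ e₁' → BetaEta e₂ e₂' → BetaEta (.app e₁ e₂) (.app e₁' e₂')
  | anno : BetaEta e e' → BetaEta (.anno e A) (.anno e' A)

end DK

/-!
Mutual induction on the bidirectional derivation. Annotations are erased and every other
rule has a type-assignment counterpart, except subsumption: there a subtyping derivation
`A ≤ B` is turned into an η-expansion of the term that retypes it from `A` to `B`.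
-/

namespace DK

variable {Ψ Ψ' : Ctx} {e f : Tm} {A B C : Ty}

theorem WfTy.weaken (h : WfTy Ψ A) (s : Ψ ⊆ Ψ') : WfTy Ψ' A :=
  fun a ha => s (h a ha)

theorem Assign.weaken (h : Assign Ψ f A) (s : Ψ ⊆ Ψ') : Assign Ψ' f A := by
  induction h generalizing Ψ' with
  | var hx => exact .var (s hx)
  | unit => exact .unit
  | lam _ ih => exact .lam (ih (List.cons_subset_cons _ s))
  | app _ _ ih₁ ih₂ => exact .app (ih₁ s) (ih₂ s)
  | allI _ ih => exact .allI (ih (List.cons_subset_cons _ s))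
  | allE _ τ hτ hw ih => exact .allE (ih s) τ hτ (hw.weaken s)

/-- The coercion realising `A ≤ B` is an η-expansion: at `A₁ → A₂ ≤ B₁ → B₂` it is
`λx. c₂ (f (c₁ x))` for a fresh `x`, where `c₁, c₂` realise the premises. -/
theorem Sub.coerce (h : Sub Ψ A B) (s : Ψ ⊆ Ψ') (hf : f.annFree) (ha : Assign Ψ' f A) :
    ∃ g, g.annFree ∧ Assign Ψ' g B ∧ BetaEta g f := by
  induction h generalizing Ψ' f with
  | var _ | unit => exact ⟨f, hf, ha, .refl⟩
  | @arr Ψ B₁ A₁ A₂ B₂ _ _ ih₁ ih₂ =>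
    obtain ⟨x, hx⟩ := Infinite.exists_notMem_finset f.fv
    have s' : Ψ ⊆ Decl.var x B₁ :: Ψ' := List.Subset.trans s (List.subset_cons_self _ _)
    obtain ⟨g₁, hg₁, ha₁, hb₁⟩ :=
      ih₁ s' (f := .var x) trivial (.var List.mem_cons_self)
    obtain ⟨g₂, hg₂, ha₂, hb₂⟩ :=
      ih₂ s' (f := .app f g₁) ⟨hf, hg₁⟩
        (.app (ha.weaken (List.subset_cons_self _ _)) ha₁)
    exact ⟨.lam x g₂, hg₂, .lam ha₂,
      (BetaEta.lam (hb₂.trans (.app .refl hb₁))).trans (.eta hx)⟩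
  | allL τ hτ hw _ ih => exact ih s hf (.allE ha τ hτ (hw.weaken s))
  | allR _ ih =>
    obtain ⟨g, hg, ha', hb⟩ :=
      ih (List.cons_subset_cons _ s) hf (ha.weaken (List.subset_cons_self _ _))
    exact ⟨g, hg, .allI ha', hb⟩

def AssignUpToBetaEta (Ψ : Ctx) (e : Tm) (A : Ty) : Prop :=
  ∃ e', e'.annFree ∧ Assign Ψ e' A ∧ BetaEta e' e.erase

def AssignAppUpToBetaEta (Ψ : Ctx) (e : Tm) (A C : Ty) : Prop :=
  ∀ f : Tm, f.annFree → Assign Ψ f A →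
    ∃ e', e'.annFree ∧ Assign Ψ (.app f e') C ∧ BetaEta e' e.erase

namespace AssignUpToBetaEta

theorem unit : AssignUpToBetaEta Ψ .unit .unit := ⟨.unit, trivial, .unit, .refl⟩

theorem var {x : ℕ} (hx : Decl.var x A ∈ Ψ) : AssignUpToBetaEta Ψ (.var x) A :=
  ⟨.var x, trivial, .var hx, .refl⟩

theorem sub (h : AssignUpToBetaEta Ψ e A) (hs : Sub Ψ A B) : AssignUpToBetaEta Ψ e B :=
  let ⟨_, hf, ha, hb⟩ := h
  let ⟨g, hg, ha', hb'⟩ := hs.coerce (List.Subset.refl _) hf ha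
  ⟨g, hg, ha', hb'.trans hb⟩

theorem allI {a : ℕ} (h : AssignUpToBetaEta (Decl.tvar a :: Ψ) e A) :
    AssignUpToBetaEta Ψ e (.all a A) :=
  let ⟨e', hf, ha, hb⟩ := h
  ⟨e', hf, .allI ha, hb⟩

theorem lam {x : ℕ} (h : AssignUpToBetaEta (Decl.var x A :: Ψ) e B) :
    AssignUpToBetaEta Ψ (.lam x e) (.arr A B) :=
  let ⟨e', hf, ha, hb⟩ := h
  ⟨.lam x e', hf, .lam ha, .lam hb⟩

theorem app {e₁ e₂ : Tm} (h₁ : AssignUpToBetaEta Ψ e₁ A)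
    (h₂ : AssignAppUpToBetaEta Ψ e₂ A C) :
    AssignUpToBetaEta Ψ (.app e₁ e₂) C :=
  let ⟨f, hf, ha, hb⟩ := h₁
  let ⟨e', hf', ha', hb'⟩ := h₂ f hf ha
  ⟨.app f e', ⟨hf, hf'⟩, ha', .app hb hb'⟩

end AssignUpToBetaEta

mutual

theorem Chk.assignUpToBetaEta {Ψ : Ctx} {e : Tm} {A : Ty} :
    Chk Ψ e A → AssignUpToBetaEta Ψ e A
  | .sub h hs => h.assignUpToBetaEta.sub hs
  | .unitI => .unit
  | .allI h => h.assignUpToBetaEta.allI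
  | .arrI h => h.assignUpToBetaEta.lam

theorem Syn.assignUpToBetaEta {Ψ : Ctx} {e : Tm} {A : Ty} :
    Syn Ψ e A → AssignUpToBetaEta Ψ e A
  | .var hx => .var hx
  | .anno _ h => h.assignUpToBetaEta
  | .unitI => .unit
  | .arrI _ _ _ h => h.assignUpToBetaEta.lam
  | .arrE h₁ h₂ => h₁.assignUpToBetaEta.app h₂.assignAppUpToBetaEta

theorem App.assignAppUpToBetaEta {Ψ : Ctx} {e : Tm} {A C : Ty} :
    App Ψ e A C → AssignAppUpToBetaEta Ψ e A C
  | .allApp τ hτ hw h => fun f hf ha => h.assignAppUpToBetaEta f hf (.allE ha τ hτ hw)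
  | .arrApp h => fun _ _ ha =>
    let ⟨e', hf', ha', hb'⟩ := h.assignUpToBetaEta
    ⟨e', hf', .app ha ha', hb'⟩

end

/-- Soundness of bidirectional typing: a checked or synthesized term has an
    annotation-free βη-equal image typable by type assignment. -/
theorem soundness_bidirectional (Ψ : Ctx) (e : Tm) (A : Ty) :
    (Chk Ψ e A → ∃ e', e'.annFree ∧ Assign Ψ e' A ∧ BetaEta e' e.erase) ∧
    (Syn Ψ e A → ∃ e', e'.annFree ∧ Assign Ψ e' A ∧ BetaEta e' e.erase) :=
  ⟨Chk.assignUpToBetaEta, Syn.assignUpToBetaEta⟩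

end DK
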